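/- Along any solution of Hamilton's equations for the Kepler-Heisenberg Hamiltonian, the quantity J = x p_x + y p_y + 2 z p_z satisfies dJ/dt = 2H. In particular, J is constant along any solution with zero energy. -/

import Mathlib

/-! `J = x p_x + y p_y + 2 z p_z` is the momentum map of the Heisenberg dilations
`(x, y, z, p_x, p_y, p_z) ↦ (λx, λy, λ²z, p_x/λ, p_y/λ, p_z/λ²)`. Both the kinetic energy and the
potential `-1 / (8π √ρ)`, with `ρ = (x² + y²)² + 16 z²` of weight 4, scale by `λ⁻²` under them,
so Euler's identity for this quasi-homogeneity turns `dJ/dt = p ∂H/∂p - q ∂H/∂q` (with weights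
1, 1, 2) into `2H`. At zero energy `J` then has vanishing derivative, hence is constant. -/

open Real

/-- The Kepler-Heisenberg Hamiltonian H = K + U on phase space coordinates. -/
noncomputable def Ham (x y z px py pz : ℝ) : ℝ :=
  (1/2) * ((px - y/2 * pz)^2 + (py + x/2 * pz)^2)
    - 1 / (8 * Real.pi * Real.sqrt ((x^2 + y^2)^2 + 16 * z^2))

/-- A solution of Hamilton's equations q̇ = ∂H/∂p, ṗ = -∂H/∂q for the
Kepler-Heisenberg Hamiltonian, avoiding the singular set (x,y,z) = 0. -/
def IsSolution (x y z px py pz : ℝ → ℝ) : Prop :=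
  (∀ t : ℝ, ¬ (x t = 0 ∧ y t = 0 ∧ z t = 0)) ∧
  ∀ t : ℝ,
    HasDerivAt x (deriv (fun s => Ham (x t) (y t) (z t) s (py t) (pz t)) (px t)) t ∧
    HasDerivAt y (deriv (fun s => Ham (x t) (y t) (z t) (px t) s (pz t)) (py t)) t ∧
    HasDerivAt z (deriv (fun s => Ham (x t) (y t) (z t) (px t) (py t) s) (pz t)) t ∧
    HasDerivAt px (-(deriv (fun s => Ham s (y t) (z t) (px t) (py t) (pz t)) (x t))) t ∧
    HasDerivAt py (-(deriv (fun s => Ham (x t) s (z t) (px t) (py t) (pz t)) (y t))) t ∧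
    HasDerivAt pz (-(deriv (fun s => Ham (x t) (y t) s (px t) (py t) (pz t)) (z t))) t

/-- The potential in `Ham` is `-1 / (8π √(koranyiQuartic x y z))`. -/
def koranyiQuartic (x y z : ℝ) : ℝ := (x ^ 2 + y ^ 2) ^ 2 + 16 * z ^ 2

lemma koranyiQuartic_pos {x y z : ℝ} (h : ¬ (x = 0 ∧ y = 0 ∧ z = 0)) :
    0 < koranyiQuartic x y z := by
  unfold koranyiQuartic
  rcases not_and_or.mp h with hx | hyz
  · positivity
  rcases not_and_or.mp hyz with hy | hz
  · positivity
  · positivity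

lemma HasDerivAt.one_div_sqrt {f : ℝ → ℝ} {f' t : ℝ} (hf : HasDerivAt f f' t)
    (hpos : 0 < f t) :
    HasDerivAt (fun s => 1 / √(f s)) (-(f' / (2 * f t * √(f t)))) t := by
  have hsqrt : 0 < √(f t) := sqrt_pos.2 hpos
  simp only [one_div]
  refine ((hf.sqrt hpos.ne').fun_inv hsqrt.ne').congr_deriv ?_
  rw [sq_sqrt hpos.le]
  field_simp

lemma hasDerivAt_ham_slice {A ρ : ℝ → ℝ} {A' ρ' t : ℝ} (hA : HasDerivAt A A' t)
    (hρ : HasDerivAt ρ ρ' t) (hpos : 0 < ρ t) :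
    HasDerivAt (fun s => 1 / 2 * A s - 1 / (8 * π * √(ρ s)))
      (A' / 2 + ρ' / (16 * π * ρ t * √(ρ t))) t := by
  have hpot := (hρ.one_div_sqrt hpos).const_mul (1 / (8 * π))
  simp only [one_div_mul_one_div] at hpot
  refine ((hA.const_mul (1 / 2)).sub hpot).congr_deriv ?_
  field_simp
  ring

lemma HasDerivAt.sq_add_sq {u v : ℝ → ℝ} {u' v' t : ℝ} (hu : HasDerivAt u u' t)
    (hv : HasDerivAt v v' t) :
    HasDerivAt (fun s => u s ^ 2 + v s ^ 2) (2 * (u t * u' + v t * v')) t := by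
  refine ((hu.pow 2).add (hv.pow 2)).congr_deriv ?_
  ring

section PartialDerivatives

variable (x y z px py pz : ℝ)

lemma deriv_ham_px : deriv (fun s => Ham x y z s py pz) px = px - y / 2 * pz := by
  have hA := ((hasDerivAt_id' px).sub_const (y / 2 * pz)).sq_add_sq
    (hasDerivAt_const px (py + x / 2 * pz))
  refine (((hA.const_mul (1 / 2)).sub_const _).congr_deriv ?_).deriv
  ring

lemma deriv_ham_py : deriv (fun s => Ham x y z px s pz) py = py + x / 2 * pz := by
  have hA := (hasDerivAt_const py (px - y / 2 * pz)).sq_add_sq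
    ((hasDerivAt_id' py).add_const (x / 2 * pz))
  refine (((hA.const_mul (1 / 2)).sub_const _).congr_deriv ?_).deriv
  ring

lemma deriv_ham_pz : deriv (fun s => Ham x y z px py s) pz =
    -(y / 2) * (px - y / 2 * pz) + x / 2 * (py + x / 2 * pz) := by
  have hA := (((hasDerivAt_id' pz).const_mul (y / 2)).const_sub px).sq_add_sq
    (((hasDerivAt_id' pz).const_mul (x / 2)).const_add py)
  refine (((hA.const_mul (1 / 2)).sub_const _).congr_deriv ?_).deriv
  ring

variable {x y z}

lemma deriv_ham_x (h : 0 < koranyiQuartic x y z) :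
    deriv (fun s => Ham s y z px py pz) x = pz / 2 * (py + x / 2 * pz)
      + 4 * x * (x ^ 2 + y ^ 2) / (16 * π * koranyiQuartic x y z * √(koranyiQuartic x y z)) := by
  have hA := (hasDerivAt_const x (px - y / 2 * pz)).sq_add_sq
    ((((hasDerivAt_id' x).div_const 2).mul_const pz).const_add py)
  have hρ : HasDerivAt (fun s => koranyiQuartic s y z) _ x :=
    (((hasDerivAt_pow 2 x).add_const (y ^ 2)).pow 2).add_const (16 * z ^ 2)
  refine ((hasDerivAt_ham_slice hA hρ h).congr_deriv ?_).deriv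
  ring

lemma deriv_ham_y (h : 0 < koranyiQuartic x y z) :
    deriv (fun s => Ham x s z px py pz) y = -(pz / 2) * (px - y / 2 * pz)
      + 4 * y * (x ^ 2 + y ^ 2) / (16 * π * koranyiQuartic x y z * √(koranyiQuartic x y z)) := by
  have hA := ((((hasDerivAt_id' y).div_const 2).mul_const pz).const_sub px).sq_add_sq
    (hasDerivAt_const y (py + x / 2 * pz))
  have hρ : HasDerivAt (fun s => koranyiQuartic x s z) _ y :=
    (((hasDerivAt_pow 2 y).const_add (x ^ 2)).pow 2).add_const (16 * z ^ 2)
  refine ((hasDerivAt_ham_slice hA hρ h).congr_deriv ?_).deriv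
  ring

lemma deriv_ham_z (h : 0 < koranyiQuartic x y z) :
    deriv (fun s => Ham x y s px py pz) z =
      32 * z / (16 * π * koranyiQuartic x y z * √(koranyiQuartic x y z)) := by
  have hA := (hasDerivAt_const z (px - y / 2 * pz)).sq_add_sq
    (hasDerivAt_const z (py + x / 2 * pz))
  have hρ : HasDerivAt (fun s => koranyiQuartic x y s) _ z :=
    ((hasDerivAt_pow 2 z).const_mul 16).const_add ((x ^ 2 + y ^ 2) ^ 2)
  refine ((hasDerivAt_ham_slice hA hρ h).congr_deriv ?_).deriv
  ring

end PartialDerivatives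

lemma ham_euler_identity {x y z : ℝ} (px py pz : ℝ) (h : 0 < koranyiQuartic x y z) :
    px * deriv (fun s => Ham x y z s py pz) px + py * deriv (fun s => Ham x y z px s pz) py
      + 2 * pz * deriv (fun s => Ham x y z px py s) pz
      - x * deriv (fun s => Ham s y z px py pz) x - y * deriv (fun s => Ham x s z px py pz) y
      - 2 * z * deriv (fun s => Ham x y s px py pz) z
      = 2 * Ham x y z px py pz := by
  rw [deriv_ham_px, deriv_ham_py, deriv_ham_pz, deriv_ham_x _ _ _ h, deriv_ham_y _ _ _ h,
    deriv_ham_z _ _ _ h, Ham, ← koranyiQuartic]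
  have hsqrt : 0 < √(koranyiQuartic x y z) := sqrt_pos.2 h
  field_simp
  unfold koranyiQuartic
  ring

/-- Along any solution, J = x p_x + y p_y + 2 z p_z satisfies dJ/dt = 2H;
    in particular J is constant along zero-energy solutions. -/
theorem J_derivative (x y z px py pz : ℝ → ℝ)
    (h : IsSolution x y z px py pz) :
    (∀ t : ℝ, HasDerivAt (fun u => x u * px u + y u * py u + 2 * z u * pz u)
        (2 * Ham (x t) (y t) (z t) (px t) (py t) (pz t)) t) ∧
    ((∀ t : ℝ, Ham (x t) (y t) (z t) (px t) (py t) (pz t) = 0) →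
      ∀ s t : ℝ, x s * px s + y s * py s + 2 * z s * pz s
        = x t * px t + y t * py t + 2 * z t * pz t) := by
  have hJ : ∀ t : ℝ, HasDerivAt (fun u => x u * px u + y u * py u + 2 * z u * pz u)
      (2 * Ham (x t) (y t) (z t) (px t) (py t) (pz t)) t := by
    intro t
    obtain ⟨hx, hy, hz, hpx, hpy, hpz⟩ := h.2 t
    refine (((hx.mul hpx).add (hy.mul hpy)).add ((hz.const_mul 2).mul hpz)).congr_deriv ?_
    linear_combination ham_euler_identity (px t) (py t) (pz t) (koranyiQuartic_pos (h.1 t))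
  refine ⟨hJ, fun hE s t => ?_⟩
  exact is_const_of_deriv_eq_zero (fun u => (hJ u).differentiableAt)
    (fun u => by rw [(hJ u).deriv, hE u, mul_zero]) s t
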